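/- arXiv:1909.06704 — 4 statements merged into one kernel-verified Lean document; each statement's English description precedes it below -/
import Mathlib

section
/- In the poset P(μ), if (s,f) is a condition, α ∈ s, β > α, and β ∈ f(α), then s ∩ (α, β] = ∅, and moreover for every extension (t,g) ≤ (s,f) we also have t ∩ (α, β] = ∅. -/
/-- A condition in the club-adding poset `P(μ)`: a pair `(s, f)` with
`s ∈ [μ⁺ \ μ]^{<μ}`, `f : s → [μ⁺ \ μ]^{<μ}`, and `f ξ ⊆ ξ'` whenever `ξ < ξ'`
are both in `s`.  (The function `f` is represented as a total function on
ordinals that takes value `∅` off `s`.) -/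
structure PCond (μ : Cardinal.{0}) where
  s : Set Ordinal.{0}
  f : Ordinal.{0} → Set Ordinal.{0}
  hs : s ⊆ Set.Ico μ.ord (Order.succ μ).ord
  hscard : Cardinal.mk s < Cardinal.lift.{1} μ
  hfsub : ∀ ξ ∈ s, f ξ ⊆ Set.Ico μ.ord (Order.succ μ).ord
  hfcard : ∀ ξ ∈ s, Cardinal.mk (f ξ) < Cardinal.lift.{1} μ
  hmono : ∀ ξ ∈ s, ∀ ξ' ∈ s, ξ < ξ' → f ξ ⊆ Set.Iio ξ'
  hdom : ∀ ξ, ξ ∉ s → f ξ = ∅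

/-- `PLe p q`: the condition `p` extends the condition `q`, i.e. `p ≤ q`. -/
def PLe {μ : Cardinal.{0}} (p q : PCond μ) : Prop :=
  q.s ⊆ p.s ∧ ∀ ξ ∈ q.s, q.f ξ ⊆ p.f ξ

/-- If `(s,f)` is a condition, `α ∈ s`, `β > α` and `β ∈ f(α)`, then
`s ∩ (α, β] = ∅`, and every extension `(t,g)` of `(s,f)` also has `t ∩ (α, β] = ∅`. -/
theorem stmt6 (μ : Cardinal.{0}) (p : PCond μ) (α β : Ordinal.{0})
    (hα : α ∈ p.s) (hβ : α < β) (hmem : β ∈ p.f α) :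
    p.s ∩ Set.Ioc α β = ∅ ∧
    ∀ q : PCond μ, PLe q p → q.s ∩ Set.Ioc α β = ∅ := by
  have key : ∀ q : PCond μ, α ∈ q.s → β ∈ q.f α → q.s ∩ Set.Ioc α β = ∅ := by
    intro q hαq hβq
    ext ξ
    simp only [Set.mem_inter_iff, Set.mem_Ioc, Set.mem_empty_iff_false, iff_false]
    rintro ⟨hξs, hαξ, hξβ⟩
    exact absurd (q.hmono α hαq ξ hξs hαξ hβq) (not_lt.2 hξβ)
  exact ⟨key p hα hmem, fun q hq => key q (hq.1 hα) (hq.2 α hα hmem)⟩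
end

section
/- P(μ) is not μ⁺-cc below any condition: for every condition (s,f) ∈ P(μ) there is an antichain of cardinality μ⁺ below (s,f). In particular, for any fixed ζ above sup(s ∪ ⋃ ran f), the conditions p_β = (s ∪ {ζ}, f ∪ {ζ ↦ {β}}) for β ∈ (ζ, μ⁺) are pairwise incompatible extensions of (s,f). -/
/-!
Every condition `p` mentions fewer than `μ⁺` ordinals, so by regularity of `μ⁺` they are all
bounded by some `ζ < μ⁺`. Above `ζ` there is room to add `ζ` to the domain with `f ζ = {β}`, for each
of the `μ⁺` ordinals `β ∈ [ζ, μ⁺)`. Adding `β + 1` to the domain as well forces `f ζ ⊆ β + 1` in any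
further extension, so two such conditions with `β ≠ β'` have no common extension.
-/

open Cardinal Set Order Function

theorem Cardinal.mk_insert_lt {α : Type*} {κ : Cardinal} {s : Set α} (a : α) (hκ : ℵ₀ ≤ κ)
    (hs : #s < κ) : #(insert a s : Set α) < κ :=
  mk_insert_le.trans_lt (add_lt_of_lt hκ hs (one_lt_aleph0.trans_le hκ))

theorem Ordinal.exists_bound_lt_ord_succ {μ : Cardinal.{u}} (hμ : ℵ₀ ≤ μ) {S : Set Ordinal.{u}}
    (hS : S ⊆ Iio (succ μ).ord) (hSμ : #S ≤ Cardinal.lift.{u + 1} μ) :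
    ∃ ζ < (succ μ).ord, μ.ord ≤ ζ ∧ S ⊆ Iio ζ := by
  have hsup : sSup S < (succ μ).ord := by
    refine Ordinal.sSup_lt_of_lt_cof ?_ hS
    rw [← Ordinal.lift_cof, (isRegular_succ hμ).cof_ord]
    exact hSμ.trans_lt (Cardinal.lift_lt.2 (lt_succ μ))
  have hbdd : BddAbove S := ⟨(succ μ).ord, fun x hx => (hS hx).le⟩
  refine ⟨max μ.ord (succ (sSup S)), max_lt (ord_lt_ord.2 (lt_succ μ))
    ((Cardinal.isSuccLimit_ord (hμ.trans (le_succ μ))).succ_lt hsup), le_max_left _ _,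
    fun x hx => ?_⟩
  exact ((le_csSup hbdd hx).trans_lt (lt_succ _)).trans_le (le_max_right _ _)

theorem PLe.refl {μ : Cardinal.{0}} (p : PCond μ) : PLe p p :=
  ⟨subset_rfl, fun _ _ => subset_rfl⟩

namespace PCond

variable {μ : Cardinal.{0}}

def support (p : PCond μ) : Set Ordinal.{0} :=
  p.s ∪ ⋃ ξ ∈ p.s, p.f ξ

theorem f_subset_support (p : PCond μ) (ξ : Ordinal.{0}) : p.f ξ ⊆ p.support := by
  by_cases hξ : ξ ∈ p.s
  · exact subset_union_of_subset_right (subset_biUnion_of_mem (u := p.f) hξ) _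
  · simp [p.hdom ξ hξ]

theorem support_subset (p : PCond μ) : p.support ⊆ Ico μ.ord (succ μ).ord :=
  union_subset p.hs (iUnion₂_subset p.hfsub)

theorem mk_support_le (hμ : ℵ₀ ≤ μ) (p : PCond μ) : #p.support ≤ Cardinal.lift.{1} μ := by
  have hμ' : ℵ₀ ≤ Cardinal.lift.{1} μ := aleph0_le_lift.2 hμ
  calc #p.support ≤ #p.s + #p.s * ⨆ ξ : p.s, #(p.f ξ) :=
        (mk_union_le _ _).trans (add_le_add le_rfl (mk_biUnion_le _ _))
    _ ≤ Cardinal.lift.{1} μ + Cardinal.lift.{1} μ * Cardinal.lift.{1} μ := by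
        gcongr
        · exact p.hscard.le
        · exact p.hscard.le
        · exact ciSup_le' fun ξ => (p.hfcard ξ ξ.2).le
    _ = Cardinal.lift.{1} μ := by rw [mul_eq_self hμ', add_eq_self hμ']

/-- The paper's `(s ∪ {ζ}, f ∪ {ζ ↦ {β}})`, with `β + 1` also put into the domain: this is what
makes these extensions pairwise incompatible. -/
def extend (hμ : ℵ₀ ≤ μ) (p : PCond μ) {ζ β : Ordinal.{0}} (hζ : μ.ord ≤ ζ) (hζβ : ζ ≤ β)
    (hβ : β < (succ μ).ord) (hp : p.support ⊆ Iio ζ) : PCond μ where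
  s := insert (β + 1) (insert ζ p.s)
  f := update p.f ζ {β}
  hs := by
    have hβ1 : β + 1 < (succ μ).ord :=
      (Cardinal.isSuccLimit_ord (hμ.trans (le_succ μ))).add_one_lt hβ
    rintro ξ (rfl | rfl | hξ)
    · exact ⟨hζ.trans (hζβ.trans le_self_add), hβ1⟩
    · exact ⟨hζ, hζβ.trans_lt hβ⟩
    · exact p.hs hξ
  hscard := mk_insert_lt _ (aleph0_le_lift.2 hμ) (mk_insert_lt _ (aleph0_le_lift.2 hμ) p.hscard)
  hfsub := by
    intro ξ _
    rcases eq_or_ne ξ ζ with rfl | hξ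
    · simpa using ⟨hζ.trans hζβ, hβ⟩
    · rw [update_of_ne hξ]
      exact (p.f_subset_support ξ).trans p.support_subset
  hfcard := by
    intro ξ _
    rcases eq_or_ne ξ ζ with rfl | hξ
    · rw [update_self, mk_singleton]
      exact one_lt_aleph0.trans_le (aleph0_le_lift.2 hμ)
    · rw [update_of_ne hξ]
      by_cases hξs : ξ ∈ p.s
      · exact p.hfcard ξ hξs
      · rw [p.hdom ξ hξs, mk_eq_zero]
        exact aleph0_pos.trans_le (aleph0_le_lift.2 hμ)
  hmono := by
    intro ξ _ ξ' hξ' hlt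
    rcases eq_or_ne ξ ζ with rfl | hξ
    · rcases hξ' with rfl | rfl | hξ'
      · simp
      · exact absurd hlt (lt_irrefl _)
      · exact absurd (hp (subset_union_left hξ')) (not_lt.2 hlt.le)
    · rw [update_of_ne hξ]
      rcases hξ' with rfl | rfl | hξ'
      · exact ((p.f_subset_support ξ).trans hp).trans
          (Iio_subset_Iio (hζβ.trans le_self_add))
      · exact (p.f_subset_support ξ).trans hp
      · by_cases hξs : ξ ∈ p.s
        · exact p.hmono ξ hξs ξ' hξ' hlt
        · simp [p.hdom ξ hξs]
  hdom := by
    intro ξ hξ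
    rw [update_of_ne (fun h => hξ (Or.inr (Or.inl h)))]
    exact p.hdom ξ fun h => hξ (Or.inr (Or.inr h))

section extend

variable (hμ : ℵ₀ ≤ μ) (p : PCond μ) {ζ : Ordinal.{0}} (hζ : μ.ord ≤ ζ) (hp : p.support ⊆ Iio ζ)

theorem extend_le {β : Ordinal.{0}} (hζβ : ζ ≤ β) (hβ : β < (succ μ).ord) :
    PLe (p.extend hμ hζ hζβ hβ hp) p := by
  refine ⟨fun ξ hξ => mem_insert_of_mem _ (mem_insert_of_mem _ hξ), fun ξ hξ => ?_⟩
  have hξζ : ξ ≠ ζ := (hp (subset_union_left hξ)).ne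
  exact (update_of_ne hξζ _ _).symm.subset

theorem le_of_compatible_extend {β β' : Ordinal.{0}} (hζβ : ζ ≤ β) (hβ : β < (succ μ).ord)
    (hζβ' : ζ ≤ β') (hβ' : β' < (succ μ).ord)
    (h : ∃ t : PCond μ, PLe t (p.extend hμ hζ hζβ hβ hp) ∧ PLe t (p.extend hμ hζ hζβ' hβ' hp)) :
    β' ≤ β := by
  obtain ⟨t, ⟨hs, -⟩, -, hf'⟩ := h
  have hζt : ζ ∈ t.s := hs (mem_insert_of_mem _ (mem_insert ζ p.s))
  have hβt : β + 1 ∈ t.s := hs (mem_insert _ _)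
  have hβ't : β' ∈ t.f ζ := hf' ζ (mem_insert_of_mem _ (mem_insert ζ p.s)) (by simp [extend])
  exact lt_add_one_iff.1 (t.hmono ζ hζt (β + 1) hβt (hζβ.trans_lt (lt_add_one β)) hβ't)

theorem eq_of_compatible_extend {β β' : Ordinal.{0}} (hζβ : ζ ≤ β) (hβ : β < (succ μ).ord)
    (hζβ' : ζ ≤ β') (hβ' : β' < (succ μ).ord)
    (h : ∃ t : PCond μ, PLe t (p.extend hμ hζ hζβ hβ hp) ∧ PLe t (p.extend hμ hζ hζβ' hβ' hp)) :
    β = β' :=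
  le_antisymm (le_of_compatible_extend hμ p hζ hp hζβ' hβ' hζβ hβ (h.imp fun _ => And.symm))
    (le_of_compatible_extend hμ p hζ hp hζβ hβ hζβ' hβ' h)

end extend

end PCond

/-- `P(μ)` is not `μ⁺`-cc below any condition: below every condition there is an
antichain of cardinality `μ⁺`. -/
theorem stmt8 (μ : Cardinal.{0}) (hμ : μ.IsRegular) (p : PCond μ) :
    ∃ A : Set (PCond μ),
      (∀ q ∈ A, PLe q p) ∧
      (∀ q ∈ A, ∀ r ∈ A, q ≠ r → ¬∃ t : PCond μ, PLe t q ∧ PLe t r) ∧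
      Cardinal.mk A = Cardinal.lift.{1} (Order.succ μ) := by
  have hμ₀ := hμ.aleph0_le
  obtain ⟨ζ, hζo, hζ, hp⟩ := Ordinal.exists_bound_lt_ord_succ hμ₀
    (p.support_subset.trans Ico_subset_Iio_self) (p.mk_support_le hμ₀)
  -- indexing `β = ζ + b` by `b < μ⁺` makes the count `#(Iio μ⁺) = μ⁺` immediate
  let Q : Iio (succ μ).ord → PCond μ := fun b =>
    p.extend hμ₀ hζ le_self_add (Ordinal.isPrincipal_add_ord (hμ₀.trans (le_succ μ)) hζo b.2) hp
  have hcompat : ∀ b b', (∃ t, PLe t (Q b) ∧ PLe t (Q b')) → b = b' := fun b b' h =>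
    Subtype.ext (add_left_cancel (p.eq_of_compatible_extend hμ₀ hζ hp _ _ _ _ h))
  refine ⟨range Q, ?_, ?_, ?_⟩
  · rintro _ ⟨b, rfl⟩
    exact p.extend_le hμ₀ hζ hp _ _
  · rintro _ ⟨b, rfl⟩ _ ⟨b', rfl⟩ hne h
    exact hne (congrArg Q (hcompat b b' h))
  · rw [mk_range_eq Q fun b b' h => hcompat b b' ⟨Q b, PLe.refl _, h ▸ PLe.refl _⟩,
      mk_Iio_ordinal, card_ord]
end

section
/- Let μ be regular with (μ⁺)^{<μ} = μ⁺, θ ≥ μ⁺⁺, and M ≺ (H_θ, ∈, μ⁺) with M ∩ μ⁺ ∈ μ⁺ of cofinality μ and μ ⊆ M. Then for every (s,f) ∈ P(μ) ∩ M, the pair (s ∪ {M ∩ μ⁺}, f ∪ {(M ∩ μ⁺) ↦ {M ∩ μ⁺}}) is a condition in P(μ) extending (s,f). -/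
/-!
Every element `x ∈ M` of size `< μ` is a subset of `M`: by elementarity, `M` contains an
injection of `x` into some `m ∈ μ⁺`; then `m ∈ M ∩ μ⁺ = γ`, so `m ⊆ γ ⊆ M`, and every point
of `x` is found in `M` as the unique preimage of its image. Hence `s` and every value of `f`
lie below `γ`, so `γ` can be added on top of `s` with value `{γ}`.
-/

open FirstOrder

/-- The relation symbols of the language of set theory: a single binary
relation `∈`. -/
inductive memRel : ℕ → Type
  | mem : memRel 2

/-- The first-order language of set theory, with a single binary relation `∈`. -/
def memLang : Language := ⟨fun _ => Empty, memRel⟩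

/-- `ZFSet` (standing in for `(H_θ, ∈)`) as a structure in the language of set
theory, interpreting the relation symbol by genuine membership. -/
instance : memLang.Structure ZFSet where
  funMap := fun f _ => f.elim
  RelMap | .mem => fun x => x 0 ∈ x 1

/-- `x` is a (von Neumann) ordinal: a transitive set of transitive sets. -/
def IsOrd (x : ZFSet) : Prop := x.IsTransitive ∧ ∀ y ∈ x.toSet, y.IsTransitive

/-- The ordinal `β` has cofinality `δ`: it has a cofinal subset of size at most
`δ`, and every subset of size `< δ` is bounded in `β`. -/
def cofEq (β : ZFSet) (δ : Cardinal.{0}) : Prop :=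
  (∃ c : ZFSet, c.toSet ⊆ β.toSet ∧ Cardinal.mk c.toSet ≤ Cardinal.lift.{1} δ ∧
      ∀ x ∈ β.toSet, ∃ y ∈ c.toSet, x ∈ y ∨ x = y) ∧
  (∀ c : ZFSet, c.toSet ⊆ β.toSet → Cardinal.mk c.toSet < Cardinal.lift.{1} δ →
      ∃ z ∈ β.toSet, ∀ y ∈ c.toSet, y ∈ z)

/-- `(s, f)` is (a code for) a condition in the club-adding poset `P(μ)`, where
`mz`, `mp` are the von Neumann ordinals `μ`, `μ⁺`:
`s ⊆ μ⁺ \ μ` of size `< μ`, `f` a function on `s` whose values are subsets of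
`μ⁺ \ μ` of size `< μ`, with `f(ξ) ⊆ ξ'` whenever `ξ ∈ ξ'` are both in `s`. -/
def IsCondZ (μc : Cardinal.{0}) (mz mp s f : ZFSet) : Prop :=
  s.toSet ⊆ mp.toSet \ mz.toSet ∧
  Cardinal.mk s.toSet < Cardinal.lift.{1} μc ∧
  ZFSet.IsFunc s (ZFSet.powerset mp) f ∧
  (∀ ξ y : ZFSet, ξ ∈ s → ZFSet.pair ξ y ∈ f →
    y.toSet ⊆ mp.toSet \ mz.toSet ∧ Cardinal.mk y.toSet < Cardinal.lift.{1} μc) ∧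
  (∀ ξ ξ' y : ZFSet, ξ ∈ s → ξ' ∈ s → ξ ∈ ξ' → ZFSet.pair ξ y ∈ f →
    y.toSet ⊆ ξ'.toSet)

/-- The condition `(s, f)` extends the condition `(t, g)`. -/
def CondLeZ (s f t g : ZFSet) : Prop :=
  t.toSet ⊆ s.toSet ∧
  ∀ ξ y y' : ZFSet, ξ ∈ t → ZFSet.pair ξ y ∈ g → ZFSet.pair ξ y' ∈ f →
    y.toSet ⊆ y'.toSet

@[simp]
theorem ZFSet.toSet_eq_coe (x : ZFSet) : x.toSet = (x : Set ZFSet) := rfl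

theorem ZFSet.pair_mem_iff_exists {a b g : ZFSet} :
    ZFSet.pair a b ∈ g ↔
      ∃ p ∈ g, ∀ q, q ∈ p ↔ ((∀ r, r ∈ q ↔ r = a) ∨ ∀ r, r ∈ q ↔ r = a ∨ r = b) := by
  have hpair : ∀ p : ZFSet,
      (∀ q, q ∈ p ↔ ((∀ r, r ∈ q ↔ r = a) ∨ ∀ r, r ∈ q ↔ r = a ∨ r = b)) ↔
        p = ZFSet.pair a b := by
    intro p
    simp only [ZFSet.ext_iff, ZFSet.pair, ZFSet.mem_insert_iff, ZFSet.mem_singleton]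
  simp only [hpair, exists_eq_right]

namespace FirstOrder.Language.ElementarySubstructure

variable {L : Language} {M : Type*} [L.Structure M]

theorem exists_realize_of_exists (S : L.ElementarySubstructure M) {α : Type*} {n : ℕ}
    (φ : L.BoundedFormula α n) (v : α → S)
    (h : ∃ xs : Fin n → M, φ.Realize (Subtype.val ∘ v) xs) :
    ∃ xs : Fin n → S, φ.Realize (Subtype.val ∘ v) (Subtype.val ∘ xs) := by
  have hexs : φ.exs.Realize (S.subtype ∘ v) := BoundedFormula.realize_exs.2 h
  rw [S.subtype.map_formula] at hexs
  obtain ⟨xs, hxs⟩ := BoundedFormula.realize_exs.1 hexs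
  exact ⟨xs, (S.subtype.map_boundedFormula φ v xs).2 hxs⟩

end FirstOrder.Language.ElementarySubstructure

@[simp]
theorem Fin.snoc_comp_castAdd_one {α : Sort*} {n : ℕ} (f : Fin n → α) (a : α) :
    (Fin.snoc f a : Fin (n + 1) → α) ∘ Fin.castAdd 1 = f :=
  Fin.snoc_comp_castSucc

namespace memLang

open FirstOrder Language BoundedFormula

def mem {α : Type} {n : ℕ} (t u : α ⊕ Fin n) : memLang.BoundedFormula α n :=
  Relations.boundedFormula₂ memRel.mem (.var t) (.var u)

@[simp]
theorem realize_mem {α : Type} {n : ℕ} (t u : α ⊕ Fin n) (v : α → ZFSet) (xs : Fin n → ZFSet) :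
    (mem t u).Realize v xs ↔ Sum.elim v xs t ∈ Sum.elim v xs u :=
  realize_rel₂

/-- `⟨a, b⟩ ∈ g`, written out as `∃ p ∈ g, p = {{a}, {a, b}}`. -/
def pairMem {α : Type} {n : ℕ} (a b g : α ⊕ Fin n) : memLang.BoundedFormula α n :=
  let template : memLang.BoundedFormula (Fin 3) 0 :=
    ∃' (mem (.inr 0) (.inl 2) ⊓ ∀' (mem (.inr 1) (.inr 0) ⇔
      (∀' (mem (.inr 2) (.inr 1) ⇔ &2 =' .var (.inl 0)) ⊔
        ∀' (mem (.inr 2) (.inr 1) ⇔ &2 =' .var (.inl 0) ⊔ &2 =' .var (.inl 1)))))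
  template.relabel ![a, b, g]

@[simp]
theorem realize_pairMem {α : Type} {n : ℕ} (a b g : α ⊕ Fin n) (v : α → ZFSet)
    (xs : Fin n → ZFSet) :
    (pairMem a b g).Realize v xs ↔
      ZFSet.pair (Sum.elim v xs a) (Sum.elim v xs b) ∈ Sum.elim v xs g := by
  rw [ZFSet.pair_mem_iff_exists]
  simp [pairMem, Fin.snoc]

def injectsIntoMember : memLang.BoundedFormula (Fin 2) 2 :=
  mem (.inr 1) (.inl 1) ⊓
  ∀' (mem (.inr 2) (.inl 0) ⟹ ∃' (mem (.inr 3) (.inr 1) ⊓ pairMem (.inr 2) (.inr 3) (.inr 0))) ⊓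
  ∀' ∀' ∀' (mem (.inr 2) (.inl 0) ⟹ mem (.inr 3) (.inl 0) ⟹
    pairMem (.inr 2) (.inr 4) (.inr 0) ⟹ pairMem (.inr 3) (.inr 4) (.inr 0) ⟹ &2 =' &3)

theorem realize_injectsIntoMember (v xs : Fin 2 → ZFSet) :
    injectsIntoMember.Realize v xs ↔
      xs 1 ∈ v 1 ∧ (∀ a ∈ v 0, ∃ b ∈ xs 1, ZFSet.pair a b ∈ xs 0) ∧
        ∀ a a' b, a ∈ v 0 → a' ∈ v 0 → ZFSet.pair a b ∈ xs 0 → ZFSet.pair a' b ∈ xs 0 →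
          a = a' := by
  simp [injectsIntoMember, Fin.snoc, and_assoc]

def memPreimage : memLang.BoundedFormula (Fin 3) 1 :=
  mem (.inr 0) (.inl 0) ⊓ pairMem (.inr 0) (.inl 1) (.inl 2)

theorem realize_memPreimage (v : Fin 3 → ZFSet) (xs : Fin 1 → ZFSet) :
    memPreimage.Realize v xs ↔ xs 0 ∈ v 0 ∧ ZFSet.pair (xs 0) (v 1) ∈ v 2 := by
  simp [memPreimage]

def pairMemRight : memLang.BoundedFormula (Fin 2) 1 :=
  pairMem (.inl 0) (.inr 0) (.inl 1)

theorem realize_pairMemRight (v : Fin 2 → ZFSet) (xs : Fin 1 → ZFSet) :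
    pairMemRight.Realize v xs ↔ ZFSet.pair (v 0) (xs 0) ∈ v 1 := by
  simp [pairMemRight]

end memLang

section ElementarySubmodel

open FirstOrder Language

universe u

variable (M : memLang.ElementarySubstructure ZFSet.{u})

theorem mem_of_pair_mem_of_unique {ξ f y : ZFSet} (hξ : ξ ∈ M) (hf : f ∈ M)
    (hy : ZFSet.pair ξ y ∈ f) (huniq : ∀ y', ZFSet.pair ξ y' ∈ f → y' = y) : y ∈ M := by
  obtain ⟨ys, hys⟩ := M.exists_realize_of_exists memLang.pairMemRight ![⟨ξ, hξ⟩, ⟨f, hf⟩]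
    ⟨![y], by simpa [memLang.realize_pairMemRight] using hy⟩
  simp only [memLang.realize_pairMemRight, Function.comp_apply, Matrix.cons_val_zero,
    Matrix.cons_val_one] at hys
  rw [← huniq _ hys]
  exact (ys 0).2

theorem coe_subset_of_injective_rel {x g : ZFSet} (hx : x ∈ M) (hg : g ∈ M)
    (hinj : ∀ a a' b, a ∈ x → a' ∈ x → ZFSet.pair a b ∈ g → ZFSet.pair a' b ∈ g → a = a')
    (himage : ∀ ξ ∈ x, ∃ b ∈ M, ZFSet.pair ξ b ∈ g) : (x : Set ZFSet) ⊆ M := by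
  intro ξ hξ
  obtain ⟨b, hb, hξb⟩ := himage ξ hξ
  obtain ⟨as, has⟩ := M.exists_realize_of_exists memLang.memPreimage
    ![⟨x, hx⟩, ⟨b, hb⟩, ⟨g, hg⟩] ⟨![ξ], by simpa [memLang.realize_memPreimage] using ⟨hξ, hξb⟩⟩
  simp only [memLang.realize_memPreimage, Function.comp_apply, Matrix.cons_val_zero,
    Matrix.cons_val_one, Matrix.cons_val_two] at has
  rw [← hinj _ _ _ has.1 hξ has.2 hξb]
  exact (as 0).2

theorem coe_subset_of_mk_le_mk {x p m : ZFSet} (hx : x ∈ M) (hp : p ∈ M) (hm : m ∈ p)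
    (hxm : Cardinal.mk (x : Set ZFSet) ≤ Cardinal.mk (m : Set ZFSet))
    (hpM : ∀ m' ∈ p, m' ∈ M → (m' : Set ZFSet) ⊆ M) : (x : Set ZFSet) ⊆ M := by
  obtain ⟨ι⟩ := hxm
  set g := ZFSet.range fun a : x => ZFSet.pair a (ι a)
  have hmem_g : ∀ a b, ZFSet.pair a b ∈ g ↔ ∃ h : a ∈ x, (ι ⟨a, h⟩ : ZFSet) = b := by
    simp [g, ZFSet.pair_inj]
  have hV : ∃ xs : Fin 2 → ZFSet, memLang.injectsIntoMember.Realize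
      (Subtype.val ∘ ![⟨x, hx⟩, ⟨p, hp⟩]) xs := by
    refine ⟨![g, m], (memLang.realize_injectsIntoMember _ _).2 ⟨hm, ?_, ?_⟩⟩
    · intro a ha
      exact ⟨ι ⟨a, ha⟩, (ι ⟨a, ha⟩).2, (hmem_g _ _).2 ⟨ha, rfl⟩⟩
    · intro a a' b _ _ hab ha'b
      obtain ⟨ha, rfl⟩ := (hmem_g _ _).1 hab
      obtain ⟨ha', hb⟩ := (hmem_g _ _).1 ha'b
      simpa using (ι.injective (Subtype.ext hb)).symm
  obtain ⟨gm, hgm⟩ := M.exists_realize_of_exists memLang.injectsIntoMember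
    ![⟨x, hx⟩, ⟨p, hp⟩] hV
  simp only [memLang.realize_injectsIntoMember, Function.comp_apply, Matrix.cons_val_zero,
    Matrix.cons_val_one] at hgm
  obtain ⟨hmp, himage, hinj⟩ := hgm
  refine coe_subset_of_injective_rel M hx (gm 0).2 hinj fun ξ hξ => ?_
  obtain ⟨b, hb, hξb⟩ := himage ξ hξ
  exact ⟨b, hpM _ hmp (gm 1).2 hb, hξb⟩

theorem subset_of_mem_of_mk_le {mz mp γ x : ZFSet} (hmz : mz ∈ mp) (hmpM : mp ∈ M)
    (hγ : γ.IsTransitive) (hγeq : (M : Set ZFSet) ∩ mp = γ) (hxM : x ∈ M) (hxmp : x ⊆ mp)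
    (hx : Cardinal.mk (x : Set ZFSet) ≤ Cardinal.mk (mz : Set ZFSet)) : x ⊆ γ := by
  have hγM : (γ : Set ZFSet) ⊆ M := fun z hz => (hγeq.superset hz).1
  have hxM' : (x : Set ZFSet) ⊆ M := coe_subset_of_mk_le_mk M hxM hmpM hmz hx
    fun m' hm' hm'M => (ZFSet.coe_subset_coe.2 (hγ m' (hγeq.subset ⟨hm'M, hm'⟩))).trans hγM
  exact fun ξ hξ => hγeq.subset ⟨hxM' hξ, hxmp hξ⟩

end ElementarySubmodel

namespace ZFSet

theorem IsFunc.fst_mem {s B f ξ y : ZFSet} (hf : s.IsFunc B f) (h : pair ξ y ∈ f) : ξ ∈ s :=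
  (pair_mem_prod.1 (hf.1 h)).1

theorem IsFunc.insert_pair {s B f γ b : ZFSet} (hf : s.IsFunc B f) (hγ : γ ∉ s) (hb : b ∈ B) :
    (insert γ s).IsFunc B (f ∪ {pair γ b}) := by
  refine ⟨fun z hz => ?_, fun ξ hξ => ?_⟩
  · rcases mem_union.1 hz with hz | hz
    · obtain ⟨a, ha, c, hc, rfl⟩ := mem_prod.1 (hf.1 hz)
      exact pair_mem_prod.2 ⟨mem_insert_of_mem _ ha, hc⟩
    · rw [mem_singleton.1 hz]
      exact pair_mem_prod.2 ⟨mem_insert _ _, hb⟩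
  · simp only [mem_union, mem_singleton, pair_inj]
    rcases mem_insert_iff.1 hξ with rfl | hξ
    · refine ⟨b, Or.inr ⟨rfl, rfl⟩, fun y hy => ?_⟩
      exact hy.resolve_left (fun h => hγ (hf.fst_mem h)) |>.2
    · obtain ⟨y, hy, huniq⟩ := hf.2 ξ hξ
      refine ⟨y, Or.inl hy, fun y' hy' => ?_⟩
      exact huniq y' (hy'.resolve_right fun h => hγ (h.1 ▸ hξ))

end ZFSet

theorem condLeZ_insert_pair {s B f γ b : ZFSet} (hf : s.IsFunc B f) (hγ : γ ∉ s) :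
    CondLeZ (insert γ s) (f ∪ {ZFSet.pair γ b}) s f := by
  refine ⟨fun ξ hξ => ZFSet.mem_insert_of_mem _ hξ, fun ξ y y' hξ hy hy' => ?_⟩
  simp only [ZFSet.mem_union, ZFSet.mem_singleton, ZFSet.pair_inj] at hy'
  obtain ⟨_, -, huniq⟩ := hf.2 ξ hξ
  rw [huniq y hy, huniq y' (hy'.resolve_right fun h => hγ (h.1 ▸ hξ))]

theorem IsCondZ.insert_pair_singleton {μc : Cardinal} {mz mp s f γ : ZFSet}
    (h : IsCondZ μc mz mp s f) (hμ : Cardinal.aleph0 ≤ μc) (hγ : γ ∈ mp) (hγmz : γ ∉ mz)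
    (hs : s ⊆ γ) (hf : ∀ ξ y, ZFSet.pair ξ y ∈ f → y ⊆ γ) :
    IsCondZ μc mz mp (insert γ s) (f ∪ {ZFSet.pair γ {γ}}) := by
  obtain ⟨hsub, hcard, hfunc, hval, hcoh⟩ := h
  have hγs : γ ∉ s := fun h => ZFSet.mem_irrefl γ (hs h)
  have hμ' : Cardinal.aleph0 ≤ Cardinal.lift.{1} μc := Cardinal.aleph0_le_lift.2 hμ
  have hγmem : γ ∈ (mp : Set ZFSet) \ mz := ⟨hγ, hγmz⟩
  simp only [ZFSet.toSet_eq_coe] at *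
  refine ⟨?_, ?_, hfunc.insert_pair hγs ?_, fun ξ y _ hy => ?_, fun ξ ξ' y _ hξ' hξξ' hy => ?_⟩
  · simp only [ZFSet.toSet_eq_coe, ZFSet.coe_insert]
    exact Set.insert_subset hγmem hsub
  · simp only [ZFSet.toSet_eq_coe, ZFSet.coe_insert]
    exact Cardinal.mk_insert_le.trans_lt
      (Cardinal.add_lt_of_lt hμ' hcard (Cardinal.one_lt_aleph0.trans_le hμ'))
  · exact ZFSet.mem_powerset.2 fun z hz => (ZFSet.mem_singleton.1 hz).symm ▸ hγ
  · simp only [ZFSet.mem_union, ZFSet.mem_singleton, ZFSet.pair_inj] at hy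
    rcases hy with hy | ⟨rfl, rfl⟩
    · exact hval ξ y (hfunc.fst_mem hy) hy
    · simp only [ZFSet.toSet_eq_coe, ZFSet.coe_singleton, Set.singleton_subset_iff,
        Cardinal.mk_singleton]
      exact ⟨hγmem, Cardinal.one_lt_aleph0.trans_le hμ'⟩
  · simp only [ZFSet.mem_union, ZFSet.mem_singleton, ZFSet.pair_inj] at hy
    rcases ZFSet.mem_insert_iff.1 hξ', hy with ⟨rfl | hξ's, hy | ⟨rfl, rfl⟩⟩
    · exact hf ξ y hy
    · exact absurd hξξ' (ZFSet.mem_irrefl _)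
    · exact hcoh ξ ξ' y (hfunc.fst_mem hy) hξ's hξξ' hy
    · exact absurd hξξ' (ZFSet.mem_asymm (hs hξ's))

theorem stmt12_general (μc : Cardinal.{0}) (hμ : μc.IsRegular)
    (mz mp : ZFSet) (hmp : IsOrd mp) (hmzmp : mz ∈ mp)
    (hmzc : Cardinal.mk mz.toSet = Cardinal.lift.{1} μc)
    (M : memLang.ElementarySubstructure ZFSet)
    (hmpM : mp ∈ M)
    (γ : ZFSet) (hγ : γ ∈ mp) (hγeq : (M : Set ZFSet) ∩ mp.toSet = γ.toSet)
    (hμM : mz.toSet ⊆ (M : Set ZFSet))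
    (s f : ZFSet) (hcond : IsCondZ μc mz mp s f)
    (hsM : s ∈ M) (hfM : f ∈ M) :
    IsCondZ μc mz mp (insert γ s) (f ∪ {ZFSet.pair γ {γ}}) ∧
    CondLeZ (insert γ s) (f ∪ {ZFSet.pair γ {γ}}) s f := by
  have ⟨hsub, hcard, hfunc, hval, _⟩ := hcond
  have hγM : (γ : Set ZFSet) ⊆ M := fun z hz => (hγeq.superset hz).1
  have hsmall : ∀ x ∈ M, x ⊆ mp →
      Cardinal.mk (x : Set ZFSet) < Cardinal.lift.{1} μc → x ⊆ γ :=
    fun x hxM hxmp hx => subset_of_mem_of_mk_le M hmzmp hmpM (hmp.2 γ hγ) hγeq hxM hxmp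
      (hmzc ▸ hx.le)
  have hsγ : s ⊆ γ := hsmall s hsM (fun ξ hξ => (hsub hξ).1) hcard
  have hfγ : ∀ ξ y, ZFSet.pair ξ y ∈ f → y ⊆ γ := by
    intro ξ y hy
    have hξ := hfunc.fst_mem hy
    obtain ⟨_, -, huniq⟩ := hfunc.2 ξ hξ
    have hyM : y ∈ M := mem_of_pair_mem_of_unique M (hγM (hsγ hξ)) hfM hy
      fun y' hy' => (huniq y' hy').trans (huniq y hy).symm
    exact hsmall y hyM (fun z hz => ((hval ξ y hξ hy).1 hz).1) (hval ξ y hξ hy).2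
  have hγmz : γ ∉ mz := fun h => ZFSet.mem_irrefl γ (hγeq.subset ⟨hμM h, hmp.1 mz hmzmp h⟩)
  exact ⟨hcond.insert_pair_singleton hμ.aleph0_le hγ hγmz hsγ hfγ,
    condLeZ_insert_pair hfunc fun h => ZFSet.mem_irrefl γ (hsγ h)⟩

/-- Let `μ` be regular with `(μ⁺)^{<μ} = μ⁺` and `M ≺ (H_θ, ∈, μ⁺)` with
`M ∩ μ⁺ ∈ μ⁺` of cofinality `μ` and `μ ⊆ M`.  Then for every condition
`(s,f) ∈ P(μ) ∩ M`, the pair `(s ∪ {M ∩ μ⁺}, f ∪ {(M ∩ μ⁺) ↦ {M ∩ μ⁺}})` is a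
condition in `P(μ)` extending `(s,f)`. -/
theorem stmt12 (μc : Cardinal.{0}) (hμ : μc.IsRegular)
    (hpow : (Order.succ μc) ^< μc = Order.succ μc)
    (mz mp : ZFSet) (hmz : IsOrd mz) (hmp : IsOrd mp) (hmzmp : mz ∈ mp)
    (hmzc : Cardinal.mk mz.toSet = Cardinal.lift.{1} μc)
    (hmpc : Cardinal.mk mp.toSet = Cardinal.lift.{1} (Order.succ μc))
    (M : memLang.ElementarySubstructure ZFSet)
    (hmpM : mp ∈ M)
    (γ : ZFSet) (hγ : γ ∈ mp) (hγeq : (M : Set ZFSet) ∩ mp.toSet = γ.toSet)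
    (hγcof : cofEq γ μc)
    (hμM : mz.toSet ⊆ (M : Set ZFSet))
    (s f : ZFSet) (hcond : IsCondZ μc mz mp s f)
    (hsM : s ∈ M) (hfM : f ∈ M) :
    IsCondZ μc mz mp (insert γ s) (f ∪ {ZFSet.pair γ {γ}}) ∧
    CondLeZ (insert γ s) (f ∪ {ZFSet.pair γ {γ}}) s f :=
  stmt12_general μc hμ mz mp hmp hmzmp hmzc M hmpM γ hγ hγeq hμM s f hcond hsM hfM
end

section
/- If an Easton-support iteration of length κ (κ Mahlo) has the property that at every stage α < κ the iterand has cardinality at most α⁺, then the full iteration has cardinality at most κ and satisfies the κ-chain condition. (Abstract version: a κ-length direct-limit system over a Mahlo κ whose initial segments at inaccessible stages have size < κ, yields a structure of size κ in which every antichain has size < κ.) -/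
/-- The ordinal `α` is an inaccessible cardinal: it is (the ordinal of) a
regular strong limit uncountable cardinal. -/
def IsInaccOrd (α : Ordinal.{0}) : Prop :=
  α.card.IsRegular ∧ α.card.IsStrongLimit ∧ Cardinal.aleph0 < α.card ∧ α = α.card.ord

/-- `C` is a club (closed unbounded) subset of the ordinal `κ`. -/
def IsClubIn (κ : Ordinal.{0}) (C : Set Ordinal.{0}) : Prop :=
  C ⊆ Set.Iio κ ∧
  (∀ α < κ, ∃ γ ∈ C, α < γ) ∧
  (∀ β < κ, 0 < β → sSup (C ∩ Set.Iio β) = β → β ∈ C)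

/-- `S` is stationary in `κ`: it meets every club of `κ`. -/
def IsStatIn (κ : Ordinal.{0}) (S : Set Ordinal.{0}) : Prop :=
  ∀ C, IsClubIn κ C → (S ∩ C).Nonempty

/-- The κ-length Easton-support system over the componentwise posets `Q`:
functions whose support is contained in `κ`, bounded below `κ`, and bounded
below every inaccessible `α < κ`. -/
def EastonP (κ : Cardinal.{0}) (Q : Ordinal.{0} → Type) (one : ∀ α, Q α) : Type 1 :=
  {p : ∀ α : Ordinal.{0}, Q α //
    {α | p α ≠ one α} ⊆ Set.Iio κ.ord ∧
    (∃ β < κ.ord, {α | p α ≠ one α} ⊆ Set.Iio β) ∧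
    ∀ α < κ.ord, IsInaccOrd α →
      ∃ β < α, {a | p a ≠ one a} ∩ Set.Iio α ⊆ Set.Iio β}

/-!
A condition is determined by its restriction to some `β < κ`, and since `κ` is a strong limit
there are fewer than `κ` such restrictions for each `β`; this bounds the size.

For the chain condition, take conditions `p i`, `i < κ`. Let `b i < κ` bound the support of
`p i` and, for inaccessible `α`, let `h α < α` bound the support of `p α` below `α`. Since `h` is
regressive on the stationary set of inaccessibles, one of its fibres `h⁻¹ {β}` contains unboundedly
many closure points of `b`; there are fewer than `κ` restrictions to `β`, so two of them, `x < y`,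
give conditions agreeing below `β`. The support of `p x` lies below `b x < y`, and that of `p y`
meets `y` only below `β`, so `p x` and `p y` agree on their common support.
-/

open Cardinal Ordinal Set Order

theorem Cardinal.IsStrongLimit.power_lt {κ a b : Cardinal} (hκ : κ.IsStrongLimit)
    (ha : a < κ) (hb : b < κ) : a ^ b < κ :=
  calc a ^ b ≤ (2 ^ a) ^ b := power_le_power_right (cantor a).le
    _ = 2 ^ (a * b) := (power_mul ..).symm
    _ < κ := hκ.isStrongPrelimit (mul_lt_of_lt hκ.aleph0_le ha hb)

section Clubs

variable {κ : Cardinal.{0}}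

theorem exists_lt_ord_forall_lt_of_mk_lt (hκ : κ.IsRegular) {s : Set Ordinal.{0}}
    (hs : s ⊆ Iio κ.ord) (hsκ : #s < lift.{1} κ) : ∃ δ < κ.ord, ∀ α ∈ s, α < δ := by
  refine ⟨sSup ((· + 1) '' s), sSup_add_one_lt_of_lt_cof ?_ hs, fun α hα => ?_⟩
  · rwa [← lift_cof, hκ.cof_ord]
  · refine (lt_add_one α).trans_le (le_csSup ⟨κ.ord, ?_⟩ (mem_image_of_mem _ hα))
    rintro _ ⟨γ, hγ, rfl⟩
    exact add_one_le_of_lt (hs hγ)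

theorem isClubIn_Iio_ord (hκ : ℵ₀ ≤ κ) : IsClubIn κ.ord (Iio κ.ord) :=
  ⟨subset_rfl, fun α hα => ⟨α + 1, (isSuccLimit_ord hκ).add_one_lt hα, lt_add_one α⟩,
    fun _ hβ _ _ => hβ⟩

theorem IsStatIn.aleph0_lt (hκ : ℵ₀ ≤ κ) (hS : IsStatIn κ.ord {α | IsInaccOrd α}) : ℵ₀ < κ := by
  obtain ⟨α, hα, hακ⟩ := hS _ (isClubIn_Iio_ord hκ)
  exact hα.2.2.1.trans (lt_ord.mp hακ)

theorem isClubIn_closurePoints (hκ : κ.IsRegular) (hω : ℵ₀ < κ) {f : Ordinal.{0} → Ordinal.{0}}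
    (hf : ∀ i, f i < κ.ord) : IsClubIn κ.ord (Iio κ.ord ∩ {α | ∀ i < α, f i < α}) := by
  refine ⟨inter_subset_left, fun δ hδ => ?_, fun β hβ _ hsup => ⟨hβ, fun i hi => ?_⟩⟩
  · -- The least fixed point of `F` above `δ` is a closure point of `f`, and stays below `κ`
    -- since `cof κ > ℵ₀`.
    let F : Ordinal.{0} → Ordinal.{0} := fun x => ⨆ i : Iio x, f i + 1
    have hF : ∀ x < κ.ord, F x < κ.ord := fun x hx =>
      lift_iSup_add_one_lt_of_lt_cof
        (by rw [← lift_cof, hκ.cof_ord, Cardinal.mk_Iio_ordinal, Cardinal.lift_id'.{0, 1}]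
            exact Cardinal.lift_lt.mpr (lt_ord.mp hx))
        fun i => hf i
    refine ⟨nfp F (δ + 1), ⟨nfp_lt_ord (by rwa [hκ.cof_ord]) hF
      ((isSuccLimit_ord hκ.aleph0_le).add_one_lt hδ), fun i hi => ?_⟩,
      (lt_add_one δ).trans_le (le_nfp F _)⟩
    obtain ⟨n, hn⟩ := lt_nfp_iff.mp hi
    calc f i < f i + 1 := lt_add_one _
      _ ≤ F (F^[n] (δ + 1)) := Ordinal.le_iSup (fun j : Iio _ => f j + 1) ⟨i, hn⟩
      _ ≤ nfp F (δ + 1) := by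
        simpa only [Function.iterate_succ_apply'] using iterate_le_nfp F (δ + 1) (n + 1)
  · rw [← hsup] at hi
    obtain ⟨ρ, ⟨⟨-, hρ⟩, hρβ⟩, hiρ⟩ := exists_lt_of_lt_csSup' hi
    exact (hρ i hiρ).trans hρβ

theorem IsStatIn.exists_unbounded_fiber (hκ : κ.IsRegular) (hω : ℵ₀ < κ) {S : Set Ordinal.{0}}
    (hS : IsStatIn κ.ord S) {h : Ordinal.{0} → Ordinal.{0}} (hh : ∀ α ∈ S, α < κ.ord → h α < α)
    {b : Ordinal.{0} → Ordinal.{0}} (hb : ∀ i, b i < κ.ord) :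
    ∃ β, ∀ δ < κ.ord, ∃ α ∈ S, α < κ.ord ∧ (∀ i < α, b i < α) ∧ h α = β ∧ δ ≤ α := by
  by_contra! hbdd
  choose g hgκ hg using hbdd
  obtain ⟨α, hαS, hακ, hα⟩ :=
    hS _ (isClubIn_closurePoints hκ hω (f := fun i => max (b i) (g i))
      fun i => max_lt (hb i) (hgκ i))
  have hα_lt : α < g (h α) := hg _ α hαS hακ (fun i hi => (le_max_left ..).trans_lt (hα i hi)) rfl
  exact hα_lt.not_gt ((le_max_right ..).trans_lt (hα _ (hh α hαS hακ)))

end Clubs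

section Easton

variable {κ : Cardinal.{0}} {Q : Ordinal.{0} → Type} {one : ∀ α, Q α}

theorem eq_of_forall_lt_eq_of_support_subset_Iio {p q : ∀ α, Q α} {β : Ordinal.{0}}
    (hp : {α | p α ≠ one α} ⊆ Iio β) (hq : {α | q α ≠ one α} ⊆ Iio β)
    (h : ∀ γ < β, p γ = q γ) : p = q := by
  funext γ
  by_cases hγ : γ < β
  · exact h γ hγ
  · rw [not_not.mp (mt (@hp γ) hγ), not_not.mp (mt (@hq γ) hγ)]

theorem forall_mem_support_inter_eq {p q : ∀ α, Q α} {β y : Ordinal.{0}}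
    (hp : {α | p α ≠ one α} ⊆ Iio y) (hq : {α | q α ≠ one α} ∩ Iio y ⊆ Iio β)
    (h : ∀ γ < β, p γ = q γ) :
    ∀ α ∈ {a | p a ≠ one a} ∩ {a | q a ≠ one a}, p α = q α :=
  fun α ⟨hpα, hqα⟩ => h α (hq ⟨hqα, hp hpα⟩)

theorem mk_pi_Iio_lt (hκ : κ.IsStrongLimit)
    (hQ : ∀ α : Ordinal.{0}, α < κ.ord → #(Q α) ≤ succ α.card) {β : Ordinal.{0}}
    (hβ : β < κ.ord) : #(∀ γ : Iio β, Q γ) < lift.{1} κ := by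
  have hβκ : β.card < κ := lt_ord.mp hβ
  calc #(∀ γ : Iio β, Q γ) ≤ prod fun _ : Iio β => succ β.card := by
        rw [mk_pi]
        exact prod_le_prod _ _ fun γ =>
          (hQ γ (γ.2.trans hβ)).trans (succ_le_succ (card_le_card γ.2.le))
    _ = lift.{1} (succ β.card ^ β.card) := by
        rw [prod_const, Cardinal.mk_Iio_ordinal, Cardinal.lift_id', lift_power]
    _ < lift.{1} κ := lift_lt.mpr (hκ.power_lt (hκ.isSuccLimit.succ_lt hβκ) hβκ)

theorem mk_eastonP_le (hκ : κ.IsStrongLimit)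
    (hQ : ∀ α : Ordinal.{0}, α < κ.ord → #(Q α) ≤ succ α.card) :
    #(EastonP κ Q one) ≤ lift.{1} κ := by
  let bounded (β : Iio κ.ord) : Set (EastonP κ Q one) := {p | {α | p.1 α ≠ one α} ⊆ Iio β}
  have hcover : ⋃ β, bounded β = Set.univ :=
    eq_univ_of_forall fun p => mem_iUnion.mpr <|
      let ⟨β, hβ, hp⟩ := p.2.2.1
      ⟨⟨β, hβ⟩, hp⟩
  have hbounded (β : Iio κ.ord) : #(bounded β) ≤ lift.{1} κ := by
    refine (mk_le_of_injective (f := fun p (γ : Iio β.1) => p.1.1 γ) fun p q hpq => ?_).trans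
      (mk_pi_Iio_lt hκ hQ β.2).le
    exact Subtype.ext <| Subtype.ext <|
      eq_of_forall_lt_eq_of_support_subset_Iio p.2 q.2 fun γ hγ => congrFun hpq ⟨γ, hγ⟩
  calc #(EastonP κ Q one) = #(⋃ β, bounded β) := by rw [hcover, mk_univ]
    _ ≤ sum fun β => #(bounded β) := mk_iUnion_le_sum_mk
    _ ≤ sum fun _ : Iio κ.ord => lift.{1} κ := sum_le_sum _ _ hbounded
    _ = lift.{1} κ := by
        rw [sum_const', Cardinal.mk_Iio_ordinal, card_ord]
        exact mul_eq_self (by simpa using hκ.aleph0_le)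

theorem EastonP.exists_ne_forall_mem_support_inter_eq (hreg : κ.IsRegular)
    (hsl : κ.IsStrongLimit) (hMahlo : IsStatIn κ.ord {α | IsInaccOrd α})
    (hQ : ∀ α : Ordinal.{0}, α < κ.ord → #(Q α) ≤ succ α.card)
    (P : Ordinal.{0} → EastonP κ Q one) :
    ∃ x < κ.ord, ∃ y < κ.ord, x ≠ y ∧
      ∀ α ∈ {a | (P x).1 a ≠ one a} ∩ {a | (P y).1 a ≠ one a}, (P x).1 α = (P y).1 α := by
  choose b hbκ hb using fun i => (P i).2.2.1
  have hbelow (α : Ordinal.{0}) : ∃ β, α < κ.ord → IsInaccOrd α →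
      β < α ∧ {a | (P α).1 a ≠ one a} ∩ Iio α ⊆ Iio β := by
    by_cases H : α < κ.ord ∧ IsInaccOrd α
    · obtain ⟨β, hβ⟩ := (P α).2.2.2 α H.1 H.2
      exact ⟨β, fun _ _ => hβ⟩
    · exact ⟨0, fun h₁ h₂ => (H ⟨h₁, h₂⟩).elim⟩
  choose h hh using hbelow
  obtain ⟨β, hfiber⟩ := hMahlo.exists_unbounded_fiber hreg (hMahlo.aleph0_lt hreg.aleph0_le)
    (fun α hI hα => (hh α hα hI).1) hbκ
  let F : Set Ordinal.{0} := {α | IsInaccOrd α ∧ α < κ.ord ∧ (∀ i < α, b i < α) ∧ h α = β}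
  have hβκ : β < κ.ord := by
    obtain ⟨α, hI, hα, -, rfl, -⟩ := hfiber 0 (isSuccLimit_ord hreg.aleph0_le).bot_lt
    exact (hh α hα hI).1.trans hα
  have hpigeon : ¬ InjOn (fun α (γ : Iio β) => (P α).1 γ) F := fun hinj => by
    obtain ⟨δ, hδκ, hδ⟩ := exists_lt_ord_forall_lt_of_mk_lt hreg (fun α hα => hα.2.1)
      ((mk_le_of_injective hinj.injective).trans_lt (mk_pi_Iio_lt hsl hQ hβκ))
    obtain ⟨α, hI, hα, hcl, hhα, hδα⟩ := hfiber δ hδκ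
    exact (hδ α ⟨hI, hα, hcl, hhα⟩).not_ge hδα
  have hcompat : ∀ x ∈ F, ∀ y ∈ F, x < y → (∀ γ < β, (P x).1 γ = (P y).1 γ) →
      ∀ α ∈ {a | (P x).1 a ≠ one a} ∩ {a | (P y).1 a ≠ one a}, (P x).1 α = (P y).1 α :=
    fun x _ y ⟨hI, hy, hcl, hhy⟩ hxy =>
      forall_mem_support_inter_eq ((hb x).trans (Iio_subset_Iio (hcl x hxy).le))
        (hhy ▸ (hh y hy hI).2)
  simp only [InjOn, not_forall] at hpigeon
  obtain ⟨x, hx, y, hy, hxy, hne⟩ := hpigeon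
  rcases lt_or_gt_of_ne hne with hlt | hlt
  · exact ⟨x, hx.2.1, y, hy.2.1, hne, hcompat x hx y hy hlt fun γ hγ => congrFun hxy ⟨γ, hγ⟩⟩
  · exact ⟨y, hy.2.1, x, hx.2.1, Ne.symm hne,
      hcompat y hy x hx hlt fun γ hγ => (congrFun hxy ⟨γ, hγ⟩).symm⟩

end Easton

/-- Abstract version of "an Easton-support iteration of length a Mahlo cardinal
`κ` whose stage-`α` iterands have size at most `α⁺` has cardinality at most `κ`
and is `κ`-cc": the Easton-support system over componentwise posets of size
`≤ α⁺` has size at most `κ`, and every family of conditions which pairwise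
disagree somewhere on their common supports (an antichain) has size `< κ`. -/
theorem stmt17 (κ : Cardinal.{0}) (hreg : κ.IsRegular) (hsl : κ.IsStrongLimit)
    (hMahlo : IsStatIn κ.ord {α | IsInaccOrd α})
    (Q : Ordinal.{0} → Type) (one : ∀ α, Q α)
    (hQ : ∀ α : Ordinal.{0}, α < κ.ord → Cardinal.mk (Q α) ≤ Order.succ α.card) :
    Cardinal.mk (EastonP κ Q one) ≤ Cardinal.lift.{1} κ ∧
    ∀ A : Set (EastonP κ Q one),
      (∀ p ∈ A, ∀ q ∈ A, p ≠ q →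
        ¬ ∀ α ∈ {a | p.1 a ≠ one a} ∩ {a | q.1 a ≠ one a}, p.1 α = q.1 α) →
      Cardinal.mk A < Cardinal.lift.{1} κ := by
  refine ⟨mk_eastonP_le hsl hQ, fun A hA => ?_⟩
  by_contra! hκA
  obtain ⟨E⟩ : Nonempty (Iio κ.ord ↪ A) := by
    rwa [← Cardinal.le_def, Cardinal.mk_Iio_ordinal, card_ord]
  have hpos : 0 < κ.ord := (isSuccLimit_ord hreg.aleph0_le).bot_lt
  let P (α : Ordinal.{0}) : EastonP κ Q one :=
    E (if hα : α < κ.ord then ⟨α, hα⟩ else ⟨0, hpos⟩)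
  obtain ⟨x, hx, y, hy, hxy, hagree⟩ :=
    EastonP.exists_ne_forall_mem_support_inter_eq hreg hsl hMahlo hQ P
  refine hA (P x) (E _).2 (P y) (E _).2 ?_ hagree
  simp only [P, dif_pos hx, dif_pos hy]
  exact fun h => hxy (congrArg Subtype.val (E.injective (Subtype.val_injective h)))
end
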